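/- For any x ∈ Q, the image ε_x(Φ) is an atomistic information algebra: its atoms are exactly the sets ε_x(M) for M a maximal coherent set of gambles, every nonzero element ε_x(D) is dominated by such a local atom, and ε_x(D) equals the intersection of all local atoms ε_x(M) containing it. -/
import Mathlib


/-- A gamble is a bounded function. -/
def Bdd {Ω : Type*} (f : Ω → ℝ) : Prop := ∃ M : ℝ, ∀ ω, |f ω| ≤ M

/-- The set of all gambles (bounded functions) on `Ω`. -/
def L (Ω : Type*) : Set (Ω → ℝ) := {f | Bdd f}

/-- Nonnegative, nonzero gambles. -/
def Lpos (Ω : Type*) : Set (Ω → ℝ) := {f | Bdd f ∧ 0 ≤ f ∧ f ≠ 0}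

/-- Coherent set of desirable gambles. -/
def Coherent {Ω : Type*} (D : Set (Ω → ℝ)) : Prop :=
  D ⊆ L Ω ∧ Lpos Ω ⊆ D ∧ (0 : Ω → ℝ) ∉ D ∧
  (∀ f g : Ω → ℝ, f ∈ D → g ∈ D → f + g ∈ D) ∧
  (∀ (c : ℝ) (f : Ω → ℝ), f ∈ D → 0 < c → c • f ∈ D)

/-- `Φ(Ω)`: coherent sets together with the set of all gambles. -/
def Phi (Ω : Type*) : Set (Set (Ω → ℝ)) := {D | Coherent D} ∪ {L Ω}

/-- Closure operator associated to the topped ∩-structure `Φ`. -/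
def Cl {Ω : Type*} (A : Set (Ω → ℝ)) : Set (Ω → ℝ) :=
  ⋂₀ {D | D ∈ Phi Ω ∧ A ⊆ D}

/-- `f` is `x`-measurable: constant on blocks of the partition of `x`. -/
def Meas {Ω : Type*} (x : Setoid Ω) (f : Ω → ℝ) : Prop :=
  ∀ a b : Ω, x.r a b → f a = f b

/-- `L_x`: the linear space of `x`-measurable gambles. -/
def Lx {Ω : Type*} (x : Setoid Ω) : Set (Ω → ℝ) := {f | Bdd f ∧ Meas x f}

/-- Combination: `D₁ · D₂ := C(D₁ ∪ D₂)`. -/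
def comb {Ω : Type*} (D₁ D₂ : Set (Ω → ℝ)) : Set (Ω → ℝ) := Cl (D₁ ∪ D₂)

/-- Extraction: `ε_x(D) := C(D ∩ L_x)`. -/
def eps {Ω : Type*} (x : Setoid Ω) (D : Set (Ω → ℝ)) : Set (Ω → ℝ) :=
  Cl (D ∩ Lx x)

/-- Maximal coherent set of gambles. -/
def MaxCoherent {Ω : Type*} (M : Set (Ω → ℝ)) : Prop :=
  Coherent M ∧ ∀ f : Ω → ℝ, Bdd f → f ≠ 0 → f ∉ M → -f ∈ M


section Aux
variable {Ω : Type*}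

lemma bdd_zero : Bdd (0 : Ω → ℝ) := ⟨0, fun ω => by simp⟩

lemma bdd_add {f g : Ω → ℝ} (hf : Bdd f) (hg : Bdd g) : Bdd (f + g) := by
  obtain ⟨Mf, hMf⟩ := hf; obtain ⟨Mg, hMg⟩ := hg
  exact ⟨Mf + Mg, fun ω => (abs_add_le _ _).trans (add_le_add (hMf ω) (hMg ω))⟩

lemma bdd_smul {c : ℝ} {f : Ω → ℝ} (hf : Bdd f) : Bdd (c • f) := by
  obtain ⟨Mf, hMf⟩ := hf
  refine ⟨|c| * Mf, fun ω => ?_⟩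
  have : |(c • f) ω| = |c| * |f ω| := by simp [abs_mul]
  rw [this]
  exact mul_le_mul_of_nonneg_left (hMf ω) (abs_nonneg c)

lemma bdd_neg {f : Ω → ℝ} (hf : Bdd f) : Bdd (-f) := by
  obtain ⟨Mf, hMf⟩ := hf
  exact ⟨Mf, fun ω => by simpa using hMf ω⟩

lemma L_mem_Phi : L Ω ∈ Phi Ω := Or.inr rfl

lemma subset_Cl (A : Set (Ω → ℝ)) : A ⊆ Cl A :=
  fun f hf => Set.mem_sInter.2 fun _ hD => hD.2 hf

lemma Cl_subset {A D : Set (Ω → ℝ)} (hD : D ∈ Phi Ω) (h : A ⊆ D) : Cl A ⊆ D :=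
  Set.sInter_subset_of_mem ⟨hD, h⟩

lemma Cl_mono {A B : Set (Ω → ℝ)} (h : A ⊆ B) : Cl A ⊆ Cl B := by
  intro f hf
  exact Set.mem_sInter.2 fun D hD => Set.mem_sInter.1 hf D ⟨hD.1, h.trans hD.2⟩

lemma coherent_ne_L {D : Set (Ω → ℝ)} (hD : Coherent D) : D ≠ L Ω := by
  intro h
  exact hD.2.2.1 (h ▸ bdd_zero)

lemma Cl_coherent {A D : Set (Ω → ℝ)} (hD : Coherent D) (h : A ⊆ D) :
    Coherent (Cl A) := by
  have hsub : Cl A ⊆ D := Cl_subset (Or.inl hD) h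
  refine ⟨hsub.trans hD.1, ?_, fun h0 => hD.2.2.1 (hsub h0), ?_, ?_⟩
  · intro f hf
    refine Set.mem_sInter.2 fun E hE => ?_
    rcases hE.1 with hE1 | hE1
    · exact hE1.2.1 hf
    · exact hE1 ▸ hf.1
  · intro f g hf hg
    refine Set.mem_sInter.2 fun E hE => ?_
    rcases hE.1 with hE1 | hE1
    · exact hE1.2.2.2.1 f g (Set.mem_sInter.1 hf E hE) (Set.mem_sInter.1 hg E hE)
    · subst hE1
      exact bdd_add (Set.mem_sInter.1 hf _ hE) (Set.mem_sInter.1 hg _ hE)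
  · intro c f hf hc
    refine Set.mem_sInter.2 fun E hE => ?_
    rcases hE.1 with hE1 | hE1
    · exact hE1.2.2.2.2 c f (Set.mem_sInter.1 hf E hE) hc
    · subst hE1
      exact bdd_smul (Set.mem_sInter.1 hf _ hE)

lemma Cl_coherent_self {C : Set (Ω → ℝ)} (hC : Coherent C) : Cl C = C :=
  (Cl_subset (Or.inl hC) subset_rfl).antisymm (subset_Cl C)

lemma eps_L (x : Setoid Ω) : eps x (L Ω) = L Ω := by
  refine (Cl_subset L_mem_Phi Set.inter_subset_left).antisymm ?_
  intro f hf
  refine Set.mem_sInter.2 fun E hE => ?_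
  rcases hE.1 with hE1 | hE1
  · exfalso
    have h1 : (fun _ : Ω => (1 : ℝ)) ∈ L Ω ∩ Lx x :=
      ⟨⟨1, fun ω => by simp⟩, ⟨1, fun ω => by simp⟩, fun a b _ => rfl⟩
    have h2 : (fun _ : Ω => (-1 : ℝ)) ∈ L Ω ∩ Lx x :=
      ⟨⟨1, fun ω => by simp⟩, ⟨1, fun ω => by simp⟩, fun a b _ => rfl⟩
    have h0 : (fun _ : Ω => (1 : ℝ)) + (fun _ : Ω => (-1 : ℝ)) ∈ E :=
      hE1.2.2.2.1 _ _ (hE.2 h1) (hE.2 h2)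
    have : (fun _ : Ω => (1 : ℝ)) + (fun _ : Ω => (-1 : ℝ)) = (0 : Ω → ℝ) := by
      funext ω; simp
    exact hE1.2.2.1 (this ▸ h0)
  · exact hE1 ▸ hf

lemma eps_subset {x : Setoid Ω} {D : Set (Ω → ℝ)} (hD : Coherent D) :
    eps x D ⊆ D := Cl_subset (Or.inl hD) Set.inter_subset_left

lemma eps_coherent {x : Setoid Ω} {D : Set (Ω → ℝ)} (hD : Coherent D) :
    Coherent (eps x D) := Cl_coherent hD Set.inter_subset_left

lemma eps_mono {x : Setoid Ω} {D D' : Set (Ω → ℝ)} (h : D ⊆ D') :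
    eps x D ⊆ eps x D' := Cl_mono (Set.inter_subset_inter_left _ h)

lemma eps_atom (x : Setoid Ω) {M D : Set (Ω → ℝ)} (hM : MaxCoherent M)
    (hD : Coherent D) (hsub : eps x M ⊆ eps x D) : eps x D = eps x M := by
  have hDL : D ∩ Lx x ⊆ eps x M := by
    intro f hf
    by_cases hfM : f ∈ M
    · exact subset_Cl _ ⟨hfM, hf.2⟩
    · exfalso
      have hbdd : Bdd f := hD.1 hf.1
      have hf0 : f ≠ 0 := by rintro rfl; exact hD.2.2.1 hf.1
      have hnf : -f ∈ M := hM.2 f hbdd hf0 hfM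
      have hnfLx : -f ∈ Lx x :=
        ⟨bdd_neg hf.2.1, fun a b hab => by simp [hf.2.2 a b hab]⟩
      have hnf' : -f ∈ eps x D := hsub (subset_Cl _ ⟨hnf, hnfLx⟩)
      have hfD : f ∈ eps x D := subset_Cl _ hf
      have h0 : f + (-f) ∈ eps x D := (eps_coherent hD).2.2.2.1 f (-f) hfD hnf'
      rw [add_neg_cancel] at h0
      exact (eps_coherent hD).2.2.1 h0
  have h2 : eps x D ⊆ eps x M := by
    have := Cl_mono hDL
    rwa [Cl_coherent_self (eps_coherent hM.1)] at this
  exact h2.antisymm hsub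

end Aux

/-- `ε_x(Φ)` is an atomistic information algebra: its atoms are exactly the
local atoms `ε_x(M)` for `M` maximal, every nonzero element is dominated by a
local atom, and every nonzero element is the intersection of the local atoms
containing it. The null element is `L(Ω)`. We assume the known facts that every
coherent set is contained in a maximal one and is the intersection of the
maximal sets containing it. -/
theorem stmt19 {Ω : Type*} (x : Setoid Ω)
    (hAtomic : ∀ D : Set (Ω → ℝ), Coherent D → ∃ M, MaxCoherent M ∧ D ⊆ M)
    (hAtomistic : ∀ D : Set (Ω → ℝ), Coherent D →
      D = ⋂₀ {M | MaxCoherent M ∧ D ⊆ M}) :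
    (∀ A : Set (Ω → ℝ),
      (A ∈ eps x '' Phi Ω ∧ A ≠ L Ω ∧
        ∀ B ∈ eps x '' Phi Ω, A ⊆ B → B = A ∨ B = L Ω) ↔
      ∃ M : Set (Ω → ℝ), MaxCoherent M ∧ A = eps x M) ∧
    (∀ D ∈ Phi Ω, eps x D ≠ L Ω →
      ∃ M : Set (Ω → ℝ), MaxCoherent M ∧ eps x D ⊆ eps x M) ∧
    (∀ D ∈ Phi Ω, eps x D ≠ L Ω →
      eps x D = ⋂₀ {A | ∃ M : Set (Ω → ℝ),
        MaxCoherent M ∧ A = eps x M ∧ eps x D ⊆ A}) := by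
  refine ⟨?_, ?_, ?_⟩
  · intro A
    constructor
    · rintro ⟨⟨D, hDPhi, rfl⟩, hne, hmax⟩
      rcases hDPhi with hDcoh | hDL
      · obtain ⟨M, hM, hDM⟩ := hAtomic D hDcoh
        have h1 : eps x D ⊆ eps x M := eps_mono hDM
        rcases hmax (eps x M) ⟨M, Or.inl hM.1, rfl⟩ h1 with h | h
        · exact ⟨M, hM, h.symm⟩
        · exact absurd h (coherent_ne_L (eps_coherent hM.1))
      · exact absurd (hDL ▸ eps_L x) hne
    · rintro ⟨M, hM, rfl⟩
      refine ⟨⟨M, Or.inl hM.1, rfl⟩, coherent_ne_L (eps_coherent hM.1), ?_⟩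
      rintro B ⟨D, hDPhi, rfl⟩ hsub
      rcases hDPhi with hDcoh | hDL
      · exact Or.inl (eps_atom x hM hDcoh hsub)
      · exact Or.inr (hDL ▸ eps_L x)
  · intro D hDPhi hne
    rcases hDPhi with hDcoh | hDL
    · obtain ⟨M, hM, hDM⟩ := hAtomic D hDcoh
      exact ⟨M, hM, eps_mono hDM⟩
    · exact absurd (hDL ▸ eps_L x) hne
  · intro D hDPhi hne
    rcases hDPhi with hDcoh | hDL
    · refine Set.Subset.antisymm ?_ ?_
      · intro f hf
        refine Set.mem_sInter.2 ?_
        rintro A ⟨M, hM, rfl, hEA⟩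
        exact hEA hf
      · intro f hf
        rw [hAtomistic (eps x D) (eps_coherent hDcoh)]
        refine Set.mem_sInter.2 ?_
        rintro M ⟨hM, hEM⟩
        have hsub : eps x D ⊆ eps x M :=
          Cl_mono fun g hg => ⟨hEM (subset_Cl _ hg), hg.2⟩
        have hfM : f ∈ eps x M :=
          Set.mem_sInter.1 hf (eps x M) ⟨M, hM, rfl, hsub⟩
        exact eps_subset hM.1 hfM
    · exact absurd (hDL ▸ eps_L x) hne
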